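/- arXiv:2210.00323 — 2 statements merged into one kernel-verified Lean document; each statement's English description precedes it below -/
import Mathlib

section
/- Let b₀ > 0 and r₀ ≥ 0 be real numbers with r₀ ≤ min{1/4, (1/9)b₀⁻²}, and set ε = 6b₀²r₀. Suppose sequences (bᵢ)ᵢ≥0 and (rᵢ)ᵢ≥0 of nonnegative reals satisfy, for all i, rᵢ < 1, b_{i+1} ≤ bᵢ/(1 − rᵢ), and r_{i+1} ≤ 2(bᵢ/(1 − rᵢ))²rᵢ². Then for all i: ε ≤ 2/3, rᵢ ≤ (1/(6b₀²))·ε^(2^i), and bᵢ/(1 − rᵢ) ≤ √3·b₀. -/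
set_option maxHeartbeats 4000000


/-- Quantitative heart of the fast convergence theorem (Lemma 5.1): for sequences
of bounds `bᵢ` and defects `rᵢ` obeying the averaging recursion, setting
`ε = 6 b₀² r₀` one has `ε ≤ 2/3`, `rᵢ ≤ ε^(2^i)/(6 b₀²)` and `bᵢ/(1-rᵢ) ≤ √3 b₀`. -/
theorem recursive_averaging_estimates
    (b r : ℕ → ℝ)
    (hb0 : 0 < b 0)
    (hbnn : ∀ i, 0 ≤ b i) (hrnn : ∀ i, 0 ≤ r i)
    (hr0 : r 0 ≤ min (1 / 4) ((1 / 9) * ((b 0) ^ 2)⁻¹))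
    (hrlt : ∀ i, r i < 1)
    (hbrec : ∀ i, b (i + 1) ≤ b i / (1 - r i))
    (hrrec : ∀ i, r (i + 1) ≤ 2 * (b i / (1 - r i)) ^ 2 * (r i) ^ 2) :
    (6 * (b 0) ^ 2 * r 0 ≤ 2 / 3) ∧
    (∀ i, r i ≤ (1 / (6 * (b 0) ^ 2)) * (6 * (b 0) ^ 2 * r 0) ^ (2 ^ i)) ∧
    (∀ i, b i / (1 - r i) ≤ Real.sqrt 3 * b 0) := by
  have hb2 : (0:ℝ) < (b 0) ^ 2 := by positivity
  have h1pos : ∀ i, (0:ℝ) < 1 - r i := fun i => by linarith [hrlt i]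
  have hr04 : r 0 ≤ 1 / 4 := hr0.trans (min_le_left _ _)
  have hr09 : (b 0) ^ 2 * r 0 ≤ 1 / 9 := by
    have h := hr0.trans (min_le_right _ _)
    have h2 : (b 0) ^ 2 * r 0 ≤ (b 0) ^ 2 * (1 / 9 * ((b 0) ^ 2)⁻¹) :=
      mul_le_mul_of_nonneg_left h hb2.le
    have h3 : (b 0) ^ 2 * (1 / 9 * ((b 0) ^ 2)⁻¹) = 1 / 9 := by
      field_simp
    linarith [h3.le, h3.ge]
  have hε23 : 6 * (b 0) ^ 2 * r 0 ≤ 2 / 3 := by nlinarith [hr09]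
  have hεnn : (0:ℝ) ≤ 6 * (b 0) ^ 2 * r 0 :=
    mul_nonneg (by positivity) (hrnn 0)
  have hsnn : (0:ℝ) ≤ Real.sqrt 3 := Real.sqrt_nonneg 3
  have hs3 : Real.sqrt 3 ^ 2 = 3 := Real.sq_sqrt (by norm_num)
  have hs17 : (17/10:ℝ) ≤ Real.sqrt 3 := by nlinarith [hs3, hsnn]
  -- bound at step 0
  have hB0 : b 0 / (1 - r 0) ≤ 4/3 * b 0 := by
    rw [div_le_iff₀ (h1pos 0)]
    nlinarith [mul_nonneg hb0.le (show (0:ℝ) ≤ 1/3 - 4/3 * r 0 by linarith)]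
  have hB0sq : (b 0 / (1 - r 0)) ^ 2 ≤ 16/9 * (b 0) ^ 2 := by
    nlinarith [mul_self_le_mul_self (div_nonneg hb0.le (h1pos 0).le) hB0]
  have hr1 : r 1 ≤ 32/9 * (b 0) ^ 2 * (r 0) ^ 2 := by
    nlinarith [hrrec 0, mul_le_mul_of_nonneg_right hB0sq (sq_nonneg (r 0))]
  have hr181 : r 1 ≤ 8/81 := by
    nlinarith [hr1, mul_le_mul_of_nonneg_right hr09 (hrnn 0), hr04, hrnn 0]
  -- the key invariant, for indices ≥ 1
  have key : ∀ i, 6 * (b 0) ^ 2 * r (i+1) ≤ (6 * (b 0) ^ 2 * r 0) ^ (2 ^ (i+1)) ∧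
      r (i+1) ≤ 8/81 ∧
      b (i+1) ≤ Real.sqrt 3 * b 0 * (1 - 18 * (b 0) ^ 2 * (r (i+1)) ^ 2) * (1 - r (i+1)) := by
    intro i
    induction i with
    | zero =>
      refine ⟨?_, hr181, ?_⟩
      · have hpow : (6 * (b 0) ^ 2 * r 0) ^ (2 ^ (0+1)) = (6 * (b 0) ^ 2 * r 0) ^ 2 := by
          norm_num
        rw [hpow]
        nlinarith [mul_le_mul_of_nonneg_left hr1 (show (0:ℝ) ≤ 6 * (b 0) ^ 2 by positivity),
          sq_nonneg ((b 0) ^ 2 * r 0), mul_nonneg hb2.le (hrnn 0)]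
      · -- b 1 bound
        have hb2r1 : (b 0) ^ 2 * r 1 ≤ 32/729 := by
          have t1 : (b 0) ^ 2 * r 1 ≤ 32/9 * ((b 0) ^ 2 * r 0) ^ 2 := by
            nlinarith [mul_le_mul_of_nonneg_left hr1 hb2.le]
          have t2 : ((b 0) ^ 2 * r 0) ^ 2 ≤ 1/81 := by
            nlinarith [hr09, mul_nonneg hb2.le (hrnn 0)]
          linarith
        have hS1 : 18 * (b 0) ^ 2 * (r 1) ^ 2 ≤ 4608/59049 := by
          nlinarith [mul_le_mul_of_nonneg_right hb2r1 (hrnn 1), hr181, hrnn 1]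
        have hb1 : b 1 ≤ 4/3 * b 0 := (hbrec 0).trans hB0
        have u1 : (54441/59049:ℝ) ≤ 1 - 18 * (b 0) ^ 2 * (r 1) ^ 2 := by linarith
        have u2 : (73/81:ℝ) ≤ 1 - r 1 := by linarith
        have hSnn : (0:ℝ) ≤ 1 - 18 * (b 0) ^ 2 * (r 1) ^ 2 := by linarith
        have hfac : (54441/59049:ℝ) * (73/81) ≤
            (1 - 18 * (b 0) ^ 2 * (r 1) ^ 2) * (1 - r 1) :=
          mul_le_mul u1 u2 (by norm_num) hSnn
        have hs' : (17/10:ℝ) * ((54441/59049) * (73/81)) ≤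
            Real.sqrt 3 * ((1 - 18 * (b 0) ^ 2 * (r 1) ^ 2) * (1 - r 1)) :=
          mul_le_mul hs17 hfac (by norm_num) hsnn
        have hc : (4/3:ℝ) ≤ (17/10) * ((54441/59049) * (73/81)) := by norm_num
        nlinarith [mul_le_mul_of_nonneg_right (hc.trans hs') (hbnn 0), hb1]
    | succ n ih =>
      obtain ⟨h1, h2, h3⟩ := ih
      have hq0 : (0:ℝ) ≤ r (n+1) := hrnn _
      have hq1 : (0:ℝ) < 1 - r (n+1) := h1pos _
      have hE : (6 * (b 0) ^ 2 * r 0) ^ (2 ^ (n+1)) ≤ 2/3 := by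
        calc (6 * (b 0) ^ 2 * r 0) ^ (2 ^ (n+1)) ≤ (6 * (b 0) ^ 2 * r 0) ^ 1 :=
              pow_le_pow_of_le_one hεnn (by linarith) Nat.one_le_two_pow
          _ = 6 * (b 0) ^ 2 * r 0 := pow_one _
          _ ≤ 2/3 := hε23
      have h6q : 6 * (b 0) ^ 2 * r (n+1) ≤ 2/3 := h1.trans hE
      have hS0 : (0:ℝ) ≤ 18 * (b 0) ^ 2 * (r (n+1)) ^ 2 := by positivity
      have hBle : b (n+1) / (1 - r (n+1)) ≤
          Real.sqrt 3 * b 0 * (1 - 18 * (b 0) ^ 2 * (r (n+1)) ^ 2) := by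
        rw [div_le_iff₀ hq1]
        nlinarith [h3]
      have hBnn : (0:ℝ) ≤ b (n+1) / (1 - r (n+1)) := div_nonneg (hbnn _) hq1.le
      have hsb : Real.sqrt 3 * b 0 * (1 - 18 * (b 0) ^ 2 * (r (n+1)) ^ 2) ≤
          Real.sqrt 3 * b 0 := by
        nlinarith [mul_nonneg (mul_nonneg hsnn (hbnn 0)) hS0]
      have hB : b (n+1) / (1 - r (n+1)) ≤ Real.sqrt 3 * b 0 := hBle.trans hsb
      have hB2 : (b (n+1) / (1 - r (n+1))) ^ 2 ≤ 3 * (b 0) ^ 2 := by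
        nlinarith [mul_self_le_mul_self hBnn hB, hs3]
      have hq' : r (n+2) ≤ 6 * (b 0) ^ 2 * (r (n+1)) ^ 2 := by
        nlinarith [hrrec (n+1), mul_le_mul_of_nonneg_right hB2 (sq_nonneg (r (n+1)))]
      have hq'0 : (0:ℝ) ≤ r (n+2) := hrnn _
      refine ⟨?_, ?_, ?_⟩
      · -- exponent step
        have hpow : (6 * (b 0) ^ 2 * r 0) ^ (2 ^ (n+2)) =
            ((6 * (b 0) ^ 2 * r 0) ^ (2 ^ (n+1))) ^ 2 := by
          rw [← pow_mul, ← pow_succ]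
        rw [hpow]
        have hsq : (6 * (b 0) ^ 2 * r (n+1)) ^ 2 ≤
            ((6 * (b 0) ^ 2 * r 0) ^ (2 ^ (n+1))) ^ 2 :=
          pow_le_pow_left₀ (mul_nonneg (by positivity) hq0) h1 2
        nlinarith [hsq, mul_le_mul_of_nonneg_left hq' (show (0:ℝ) ≤ 6 * (b 0) ^ 2 by positivity)]
      · nlinarith [hq', mul_le_mul_of_nonneg_right h6q hq0, h2, hq0]
      · -- b bound step
        have hb2q : (b 0) ^ 2 * r (n+1) ≤ 1/9 := by linarith
        have ha : (b 0) ^ 2 * r (n+2) ≤ 6 * ((b 0) ^ 2 * r (n+1)) ^ 2 := by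
          nlinarith [mul_le_mul_of_nonneg_left hq' hb2.le]
        have ha2 : ((b 0) ^ 2 * r (n+1)) ^ 2 ≤ 1/81 := by
          nlinarith [hb2q, mul_nonneg hb2.le hq0]
        have hb2q' : (b 0) ^ 2 * r (n+2) ≤ 2/27 := by linarith
        have hS' : 18 * (b 0) ^ 2 * (r (n+2)) ^ 2 ≤ 4/3 * r (n+2) := by
          have t : (b 0) ^ 2 * r (n+2) * r (n+2) ≤ 2/27 * r (n+2) :=
            mul_le_mul_of_nonneg_right hb2q' hq'0
          nlinarith [t]
        have hS'0 : (0:ℝ) ≤ 18 * (b 0) ^ 2 * (r (n+2)) ^ 2 := by positivity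
        have hkey : 1 - 18 * (b 0) ^ 2 * (r (n+1)) ^ 2 ≤
            (1 - 18 * (b 0) ^ 2 * (r (n+2)) ^ 2) * (1 - r (n+2)) := by
          nlinarith [hS', hq', hS0, mul_nonneg hS'0 hq'0]
        calc b (n+2) ≤ b (n+1) / (1 - r (n+1)) := hbrec (n+1)
          _ ≤ Real.sqrt 3 * b 0 * (1 - 18 * (b 0) ^ 2 * (r (n+1)) ^ 2) := hBle
          _ ≤ Real.sqrt 3 * b 0 *
              ((1 - 18 * (b 0) ^ 2 * (r (n+2)) ^ 2) * (1 - r (n+2))) :=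
            mul_le_mul_of_nonneg_left hkey (mul_nonneg hsnn (hbnn 0))
          _ = Real.sqrt 3 * b 0 * (1 - 18 * (b 0) ^ 2 * (r (n+2)) ^ 2) * (1 - r (n+2)) := by
            ring
  refine ⟨hε23, ?_, ?_⟩
  · intro i
    cases i with
    | zero =>
      have heq : (1 / (6 * (b 0) ^ 2)) * (6 * (b 0) ^ 2 * r 0) ^ (2 ^ 0) = r 0 := by
        rw [pow_zero, pow_one]
        field_simp
      rw [heq]
    | succ n =>
      have h := (key n).1
      calc r (n+1) = (1 / (6 * (b 0) ^ 2)) * (6 * (b 0) ^ 2 * r (n+1)) := by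
            field_simp
        _ ≤ (1 / (6 * (b 0) ^ 2)) * (6 * (b 0) ^ 2 * r 0) ^ (2 ^ (n+1)) :=
            mul_le_mul_of_nonneg_left h (by positivity)
  · intro i
    cases i with
    | zero =>
      rw [div_le_iff₀ (h1pos 0)]
      have hmm : (17/10:ℝ) * (3/4) ≤ Real.sqrt 3 * (1 - r 0) :=
        mul_le_mul hs17 (by linarith) (by norm_num) hsnn
      nlinarith [mul_le_mul_of_nonneg_left hmm hb0.le]
    | succ n =>
      have h := (key n).2.2
      rw [div_le_iff₀ (h1pos (n+1))]
      nlinarith [h, mul_nonneg (mul_nonneg hsnn (hbnn 0)) (h1pos (n+1)).le,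
        mul_nonneg (mul_nonneg (mul_nonneg hsnn (hbnn 0)) (h1pos (n+1)).le)
          (show (0:ℝ) ≤ 18 * (b 0) ^ 2 * (r (n+1)) ^ 2 by positivity)]
end

section
/- Let G be a groupoid over a set M with source/target maps s, t : G → M, and let E be a family of finite-dimensional real inner product spaces indexed by M. Suppose λ assigns to each arrow g a linear map λ_g : E_{sg} → E_{tg} such that sup over all g of ‖λ_g‖ = b < ∞ and such that sup_x ‖id − λ_{1x}‖ + sup over composable pairs ‖λ_{g₁g₂} − λ_{g₁}∘λ_{g₂}‖ = r < 1. Then every λ_g is a linear isomorphism. -/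
open CategoryTheory

/-- If a pseudo-representation `lam` of a groupoid `G ⇉ M` on a family of
finite-dimensional real inner product spaces has bounded norm and total defect
`sup_x ‖id - λ_{1x}‖ + sup ‖λ_{g₁g₂} - λ_{g₁}∘λ_{g₂}‖ < 1`, then every `λ_g` is a
linear isomorphism. -/
theorem pseudo_representation_invertible
    (G : Type*) [Groupoid G]
    (E : G → Type*) [∀ x, NormedAddCommGroup (E x)] [∀ x, InnerProductSpace ℝ (E x)]
    [∀ x, FiniteDimensional ℝ (E x)]
    (lam : ∀ {x y : G}, (x ⟶ y) → (E x →L[ℝ] E y))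
    (b : ℝ) (hb : ∀ {x y : G} (g : x ⟶ y), ‖lam g‖ ≤ b)
    (r₁ r₂ : ℝ)
    (hunit : ∀ x : G, ‖ContinuousLinearMap.id ℝ (E x) - lam (𝟙 x)‖ ≤ r₁)
    (hmul : ∀ {x y z : G} (g₂ : x ⟶ y) (g₁ : y ⟶ z),
      ‖lam (g₂ ≫ g₁) - (lam g₁).comp (lam g₂)‖ ≤ r₂)
    (hr : r₁ + r₂ < 1) :
    ∀ {x y : G} (g : x ⟶ y), Function.Bijective (lam g) := by
  -- For every arrow, the composition λ_{g⁻¹} ∘ λ_g is a unit in End(E_{sg}).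
  have key : ∀ {x y : G} (g : x ⟶ y),
      IsUnit ((lam (Groupoid.inv g)).comp (lam g)) := by
    intro x y g
    set a : E x →L[ℝ] E x := (lam (Groupoid.inv g)).comp (lam g) with ha
    have hnorm : ‖(1 : E x →L[ℝ] E x) - a‖ < 1 := by
      have h1 : (1 : E x →L[ℝ] E x) - a
          = (ContinuousLinearMap.id ℝ (E x) - lam (𝟙 x)) + (lam (𝟙 x) - a) := by
        rw [ContinuousLinearMap.one_def]
        abel
      have h2 : ‖lam (𝟙 x) - a‖ ≤ r₂ := by
        have := hmul g (Groupoid.inv g)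
        rwa [Groupoid.comp_inv] at this
      calc ‖(1 : E x →L[ℝ] E x) - a‖
          ≤ ‖ContinuousLinearMap.id ℝ (E x) - lam (𝟙 x)‖ + ‖lam (𝟙 x) - a‖ := by
            rw [h1]; exact norm_add_le _ _
        _ ≤ r₁ + r₂ := add_le_add (hunit x) h2
        _ < 1 := hr
    have hu := isUnit_one_sub_of_norm_lt_one hnorm
    rwa [sub_sub_cancel] at hu
  intro x y g
  obtain ⟨u₁, hu₁⟩ := key g
  have h₂ := key (Groupoid.inv g)
  have hinv : Groupoid.inv (Groupoid.inv g) = g := by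
    simp [Groupoid.inv_eq_inv]
  rw [hinv] at h₂
  obtain ⟨u₂, hu₂⟩ := h₂
  constructor
  · intro a b hab
    have h : ((lam (Groupoid.inv g)).comp (lam g)) a
        = ((lam (Groupoid.inv g)).comp (lam g)) b := by
      simp only [ContinuousLinearMap.comp_apply, hab]
    rw [← hu₁] at h
    have h' : (↑u₁⁻¹ : E x →L[ℝ] E x) ((↑u₁ : E x →L[ℝ] E x) a)
        = (↑u₁⁻¹ : E x →L[ℝ] E x) ((↑u₁ : E x →L[ℝ] E x) b) := by rw [h]
    have hia : ∀ c : E x, (↑u₁⁻¹ : E x →L[ℝ] E x) ((↑u₁ : E x →L[ℝ] E x) c) = c := by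
      intro c
      calc (↑u₁⁻¹ : E x →L[ℝ] E x) ((↑u₁ : E x →L[ℝ] E x) c)
          = ((↑u₁⁻¹ * ↑u₁ : E x →L[ℝ] E x)) c := rfl
        _ = c := by rw [u₁.inv_mul]; rfl
    rwa [hia, hia] at h'
  · intro v
    refine ⟨lam (Groupoid.inv g) ((↑u₂⁻¹ : E y →L[ℝ] E y) v), ?_⟩
    have h : (↑u₂ : E y →L[ℝ] E y) ((↑u₂⁻¹ : E y →L[ℝ] E y) v) = v := by
      calc (↑u₂ : E y →L[ℝ] E y) ((↑u₂⁻¹ : E y →L[ℝ] E y) v)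
          = ((↑u₂ * ↑u₂⁻¹ : E y →L[ℝ] E y)) v := rfl
        _ = v := by rw [u₂.mul_inv]; rfl
    rw [hu₂] at h
    simpa [ContinuousLinearMap.comp_apply] using h
end
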